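/- arXiv:2101.05865 — 3 statements merged into one kernel-verified Lean document; each statement's English description precedes it below -/
import Mathlib

section
/- Let k ≥ 1, let r_1, …, r_k be positive reals with r = r_1 + ⋯ + r_k, let b_1, …, b_k be reals with b = b_1 + ⋯ + b_k, and let A_1, …, A_k : ℝ → ℝ be nondecreasing functions with A = A_1 + ⋯ + A_k. Define U(t) = sup_{0 ≤ s ≤ t} (A(t) − A(s) − r·(t − s)) and U_l(t) = sup_{0 ≤ s ≤ t} (A_l(t) − A_l(s) − r_l·(t − s)), and let N(t) = ⌈max(0, U(t) − b)⌉ and N_l(t) = ⌈max(0, U_l(t) − b_l)⌉ be the numbers of messages waiting for tokens at time t in the one-bucket and in the l-th sub-bucket system, respectively. Then for every t ≥ 0, N(t) ≤ N_1(t) + ⋯ + N_k(t). (Pointwise form of the paper's Proposition 1: at every instant, the one-bucket system has no more messages accruing rate-limiting delay than the k sub-token-bucket system, irrespective of how messages are distributed to the k sub-token buckets.) -/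
/-! Each sub-bucket backlog `U_l(t)` dominates its own term of Reich's formula at any common
time `s`, and these terms add up to the aggregate term, so `U(t) ≤ ∑ U_l(t)`. The message count
`x ↦ ⌈max 0 x⌉` is monotone and subadditive, so after subtracting `b = ∑ b_l` the inequality
passes to the counts. -/

open Finset

noncomputable def backlog (A : ℝ → ℝ) (r t : ℝ) : ℝ :=
  sSup ((fun s => A t - A s - r * (t - s)) '' Set.Icc 0 t)

section Backlog

variable {t : ℝ}

lemma bddAbove_backlog_image {A : ℝ → ℝ} {r : ℝ} (hA : Monotone A) (hr : 0 ≤ r) :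
    BddAbove ((fun s => A t - A s - r * (t - s)) '' Set.Icc 0 t) := by
  refine ⟨A t - A 0, ?_⟩
  rintro _ ⟨s, ⟨hs0, hst⟩, rfl⟩
  have hAs : A 0 ≤ A s := hA hs0
  nlinarith [mul_nonneg hr (sub_nonneg.2 hst)]

lemma le_backlog {A : ℝ → ℝ} {r s : ℝ} (hA : Monotone A) (hr : 0 ≤ r) (hs : s ∈ Set.Icc 0 t) :
    A t - A s - r * (t - s) ≤ backlog A r t :=
  le_csSup (bddAbove_backlog_image hA hr) ⟨s, hs, rfl⟩

lemma backlog_sum_le {ι : Type*} (S : Finset ι) {A : ι → ℝ → ℝ} {r : ι → ℝ}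
    (hA : ∀ i ∈ S, Monotone (A i)) (hr : ∀ i ∈ S, 0 ≤ r i) (ht : 0 ≤ t) :
    backlog (∑ i ∈ S, A i) (∑ i ∈ S, r i) t ≤ ∑ i ∈ S, backlog (A i) (r i) t := by
  refine csSup_le ((Set.nonempty_Icc.2 ht).image _) ?_
  rintro _ ⟨s, hs, rfl⟩
  calc _ = ∑ i ∈ S, (A i t - A i s - r i * (t - s)) := by
        simp only [Finset.sum_apply, sum_sub_distrib, sum_mul]
    _ ≤ _ := sum_le_sum fun i hi => le_backlog (hA i hi) (hr i hi) hs

end Backlog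

section CeilMaxZero

variable {α : Type*} [Field α] [LinearOrder α] [IsStrictOrderedRing α] [FloorRing α]

lemma ceil_max_zero_add_le (x y : α) : ⌈max 0 (x + y)⌉ ≤ ⌈max 0 x⌉ + ⌈max 0 y⌉ :=
  (Int.ceil_le_ceil <| max_le (by positivity) <|
    add_le_add (le_max_right _ _) (le_max_right _ _)).trans (Int.ceil_add_le _ _)

lemma ceil_max_zero_sum_le {ι : Type*} (S : Finset ι) (f : ι → α) :
    ⌈max 0 (∑ i ∈ S, f i)⌉ ≤ ∑ i ∈ S, ⌈max 0 (f i)⌉ :=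
  le_sum_of_subadditive (fun x => ⌈max 0 x⌉) (by simp) ceil_max_zero_add_le S f

end CeilMaxZero

theorem prop1_pointwise_general (k : ℕ)
    (rl : Fin k → ℝ) (hrl : ∀ l, 0 < rl l)
    (bl : Fin k → ℝ)
    (Al : Fin k → ℝ → ℝ) (hAl : ∀ l, Monotone (Al l))
    (r : ℝ) (hr : r = ∑ l, rl l)
    (b : ℝ) (hb : b = ∑ l, bl l)
    (A : ℝ → ℝ) (hA : A = ∑ l, Al l)
    (U : ℝ → ℝ)
    (hU : ∀ t, U t = sSup ((fun s => A t - A s - r * (t - s)) '' Set.Icc 0 t))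
    (Ul : Fin k → ℝ → ℝ)
    (hUl : ∀ l t, Ul l t =
      sSup ((fun s => Al l t - Al l s - rl l * (t - s)) '' Set.Icc 0 t))
    (N : ℝ → ℤ) (hN : ∀ t, N t = ⌈max 0 (U t - b)⌉)
    (Nl : Fin k → ℝ → ℤ) (hNl : ∀ l t, Nl l t = ⌈max 0 (Ul l t - bl l)⌉)
    (t : ℝ) (ht : 0 ≤ t) :
    N t ≤ ∑ l, Nl l t := by
  have hUt : U t ≤ ∑ l, Ul l t := by
    have h := backlog_sum_le univ (fun l _ => hAl l) (fun l _ => (hrl l).le) ht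
    rw [← hA, ← hr] at h
    simp only [hU, hUl]
    exact h
  calc N t = ⌈max 0 (U t - b)⌉ := hN t
    _ ≤ ⌈max 0 (∑ l, (Ul l t - bl l))⌉ := by
        gcongr
        rw [hb, sum_sub_distrib]
        linarith
    _ ≤ ∑ l, ⌈max 0 (Ul l t - bl l)⌉ := ceil_max_zero_sum_le _ _
    _ = ∑ l, Nl l t := by simp only [hNl]

/-- Pointwise form of Proposition 1: at every instant `t ≥ 0`, the one-bucket system
has no more messages accruing rate-limiting delay than the k sub-token-bucket system. -/
theorem prop1_pointwise (k : ℕ) (hk : 1 ≤ k)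
    (rl : Fin k → ℝ) (hrl : ∀ l, 0 < rl l)
    (bl : Fin k → ℝ)
    (Al : Fin k → ℝ → ℝ) (hAl : ∀ l, Monotone (Al l))
    (r : ℝ) (hr : r = ∑ l, rl l)
    (b : ℝ) (hb : b = ∑ l, bl l)
    (A : ℝ → ℝ) (hA : A = ∑ l, Al l)
    (U : ℝ → ℝ)
    (hU : ∀ t, U t = sSup ((fun s => A t - A s - r * (t - s)) '' Set.Icc 0 t))
    (Ul : Fin k → ℝ → ℝ)
    (hUl : ∀ l t, Ul l t =
      sSup ((fun s => Al l t - Al l s - rl l * (t - s)) '' Set.Icc 0 t))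
    (N : ℝ → ℤ) (hN : ∀ t, N t = ⌈max 0 (U t - b)⌉)
    (Nl : Fin k → ℝ → ℤ) (hNl : ∀ l t, Nl l t = ⌈max 0 (Ul l t - bl l)⌉)
    (t : ℝ) (ht : 0 ≤ t) :
    N t ≤ ∑ l, Nl l t :=
  prop1_pointwise_general k rl hrl bl Al hAl r hr b hb A hA U hU Ul hUl N hN Nl hNl t ht
end

section
/- Let r_1, r_2 > 0 with r = r_1 + r_2, let b_1, b_2 be reals with b = b_1 + b_2, and let A_1, A_2 : ℝ → ℝ be nondecreasing with A = A_1 + A_2. With U(t) = sup_{0 ≤ s ≤ t} (A(t) − A(s) − r·(t − s)), U_l(t) = sup_{0 ≤ s ≤ t} (A_l(t) − A_l(s) − r_l·(t − s)), N(t) = ⌈max(0, U(t) − b)⌉ and N_l(t) = ⌈max(0, U_l(t) − b_l)⌉ for l = 1, 2, define the cumulative rate-limiting delays S(t) = ∫₀ᵗ N(u) du and S^(2)(t) = ∫₀ᵗ (N_1(u) + N_2(u)) du (as lower Lebesgue integrals of the nonnegative integrands over [0, t]). Then S(t) ≤ S^(2)(t) for all t ≥ 0. (This is the paper's Proposition 1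 for a split into k = 2 sub-token buckets: splitting a token bucket (r, b) into sub-token buckets (r_1,ب_1) and (r_2, b_2) with r = r_1 + r_2 and b = b_1 + b_2 can never improve the running sum of the message delays, irrespective of how messages are distributed to the sub-token buckets.) -/
open MeasureTheory ENNReal

/-- Proposition 1 (k = 2): splitting a token bucket `(r, b)` into sub-token buckets
`(r₁, b₁)` and `(r₂, b₂)` with `r = r₁ + r₂` and `b = b₁ + b₂` can never improve the
running sum of message delays, irrespective of how messages are split. -/
theorem prop1_two_buckets (r₁ r₂ : ℝ) (hr₁ : 0 < r₁) (hr₂ : 0 < r₂)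
    (b₁ b₂ : ℝ)
    (A₁ A₂ : ℝ → ℝ) (hA₁ : Monotone A₁) (hA₂ : Monotone A₂)
    (r : ℝ) (hr : r = r₁ + r₂)
    (b : ℝ) (hb : b = b₁ + b₂)
    (A : ℝ → ℝ) (hA : A = A₁ + A₂)
    (U U₁ U₂ : ℝ → ℝ)
    (hU : ∀ t, U t = sSup ((fun s => A t - A s - r * (t - s)) '' Set.Icc 0 t))
    (hU₁ : ∀ t, U₁ t = sSup ((fun s => A₁ t - A₁ s - r₁ * (t - s)) '' Set.Icc 0 t))
    (hU₂ : ∀ t, U₂ t = sSup ((fun s => A₂ t - A₂ s - r₂ * (t - s)) '' Set.Icc 0 t))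
    (N N₁ N₂ : ℝ → ℤ)
    (hN : ∀ t, N t = ⌈max 0 (U t - b)⌉)
    (hN₁ : ∀ t, N₁ t = ⌈max 0 (U₁ t - b₁)⌉)
    (hN₂ : ∀ t, N₂ t = ⌈max 0 (U₂ t - b₂)⌉)
    (S S₂ : ℝ → ℝ≥0∞)
    (hS : ∀ t, S t = ∫⁻ u in Set.Icc 0 t, ENNReal.ofReal ((N u : ℝ)))
    (hS₂ : ∀ t, S₂ t = ∫⁻ u in Set.Icc 0 t, ENNReal.ofReal ((N₁ u : ℝ) + (N₂ u : ℝ)))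
    (t : ℝ) (ht : 0 ≤ t) :
    S t ≤ S₂ t := by
  rw [hS, hS₂]
  apply lintegral_mono_ae
  refine MeasureTheory.ae_of_all _ (fun u => ?_)
  apply ENNReal.ofReal_le_ofReal
  have key : ∀ (B : ℝ → ℝ), Monotone B → ∀ (ρ : ℝ), 0 < ρ → ∀ s ∈ Set.Icc (0:ℝ) u,
      B u - B s - ρ * (u - s) ≤ B u - B 0 := by
    intro B hB ρ hρ s hs
    have h1 : B 0 ≤ B s := hB hs.1
    have h2 : 0 ≤ ρ * (u - s) := mul_nonneg hρ.le (by linarith [hs.2])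
    linarith
  -- U u ≤ U₁ u + U₂ u
  by_cases hu : 0 ≤ u
  · have hne : u ∈ Set.Icc (0:ℝ) u := ⟨hu, le_refl u⟩
    have hb1 : BddAbove ((fun s => A₁ u - A₁ s - r₁ * (u - s)) '' Set.Icc 0 u) :=
      ⟨A₁ u - A₁ 0, by rintro x ⟨s, hs, rfl⟩; exact key A₁ hA₁ r₁ hr₁ s hs⟩
    have hb2 : BddAbove ((fun s => A₂ u - A₂ s - r₂ * (u - s)) '' Set.Icc 0 u) :=
      ⟨A₂ u - A₂ 0, by rintro x ⟨s, hs, rfl⟩; exact key A₂ hA₂ r₂ hr₂ s hs⟩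
    have hUle : U u ≤ U₁ u + U₂ u := by
      rw [hU, hU₁, hU₂]
      apply csSup_le ⟨_, Set.mem_image_of_mem _ hne⟩
      rintro x ⟨s, hs, rfl⟩
      have e1 : A₁ u - A₁ s - r₁ * (u - s) ≤
          sSup ((fun s => A₁ u - A₁ s - r₁ * (u - s)) '' Set.Icc 0 u) :=
        le_csSup hb1 (Set.mem_image_of_mem _ hs)
      have e2 : A₂ u - A₂ s - r₂ * (u - s) ≤
          sSup ((fun s => A₂ u - A₂ s - r₂ * (u - s)) '' Set.Icc 0 u) :=
        le_csSup hb2 (Set.mem_image_of_mem _ hs)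
      have : A u - A s - r * (u - s) =
          (A₁ u - A₁ s - r₁ * (u - s)) + (A₂ u - A₂ s - r₂ * (u - s)) := by
        rw [hA, hr]; simp [Pi.add_apply]; ring
      show A u - A s - r * (u - s) ≤ _
      linarith
    have hmax : max 0 (U u - b) ≤ max 0 (U₁ u - b₁) + max 0 (U₂ u - b₂) := by
      rcases le_or_gt (U u - b) 0 with h | h
      · calc max 0 (U u - b) = 0 := max_eq_left h
          _ ≤ _ := add_nonneg (le_max_left _ _) (le_max_left _ _)
      · rw [max_eq_right h.le]
        have : U u - b ≤ (U₁ u - b₁) + (U₂ u - b₂) := by rw [hb]; linarith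
        exact this.trans (add_le_add (le_max_right _ _) (le_max_right _ _))
    have hceil : (N u : ℝ) ≤ (N₁ u : ℝ) + (N₂ u : ℝ) := by
      rw [hN, hN₁, hN₂]
      have h1 : (⌈max 0 (U u - b)⌉ : ℤ) ≤ ⌈max 0 (U₁ u - b₁) + max 0 (U₂ u - b₂)⌉ :=
        Int.ceil_le_ceil hmax
      have h2 : (⌈max 0 (U₁ u - b₁) + max 0 (U₂ u - b₂)⌉ : ℤ) ≤
          ⌈max 0 (U₁ u - b₁)⌉ + ⌈max 0 (U₂ u - b₂)⌉ := Int.ceil_add_le _ _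
      have := h1.trans h2
      exact_mod_cast by push_cast; exact_mod_cast this
    exact hceil
  · -- u < 0, Icc 0 u empty for all sups; sSup ∅ = 0
    have hempty : Set.Icc (0:ℝ) u = ∅ := Set.Icc_eq_empty (by linarith)
    have hU0 : U u = 0 := by rw [hU, hempty]; simp [Real.sSup_empty]
    have hU10 : U₁ u = 0 := by rw [hU₁, hempty]; simp [Real.sSup_empty]
    have hU20 : U₂ u = 0 := by rw [hU₂, hempty]; simp [Real.sSup_empty]
    rw [hN, hN₁, hN₂, hU0, hU10, hU20]
    have hmax : max 0 (0 - b) ≤ max 0 (0 - b₁) + max 0 (0 - b₂) := by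
      rcases le_or_gt (-b) 0 with h | h
      · simp only [zero_sub]
        calc max 0 (-b) = 0 := max_eq_left h
          _ ≤ _ := add_nonneg (le_max_left _ _) (le_max_left _ _)
      · simp only [zero_sub]
        rw [max_eq_right h.le]
        have : -b ≤ -b₁ + -b₂ := by rw [hb]; linarith
        exact this.trans (add_le_add (le_max_right _ _) (le_max_right _ _))
    have h1 : (⌈max 0 (0 - b)⌉ : ℤ) ≤ ⌈max 0 (0 - b₁) + max 0 (0 - b₂)⌉ :=
      Int.ceil_le_ceil hmax
    have h2 := Int.ceil_add_le (max 0 (0 - b₁)) (max 0 (0 - b₂))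
    have := h1.trans h2
    push_cast
    exact_mod_cast this
end

section
/- Let k ≥ 1, let r_1, …, r_k > 0 with r = r_1 + ⋯ + r_k, let b_1, …, b_k be reals with b = b_1 + ⋯ + b_k, and let A_1, …, A_k : ℝ → ℝ be nondecreasing with A = A_1 + ⋯ + A_k. With U(t) = sup_{0 ≤ s ≤ t} (A(t) − A(s) − r·(t − s)), U_l(t) = sup_{0 ≤ s ≤ t} (A_l(t) − A_l(s) − r_l·(t − s)), N(t) = ⌈max(0, U(t) − b)⌉ and N_l(t) = ⌈max(0, U_l(t) − b_l)⌉, define S(t) = ∫₀ᵗ N(u) du and S^(k)(t) = ∫₀ᵗ Σ_{l=1}^k N_l(u) du (as lower Lebesgue integrals of the nonnegative integrands over [0, t]). Then S(t) ≤ S^(k)(t) for all t ≥ 0. (This is the paper's Proposition 1: given a two-parameter token bucket (r, b) and a general message arrival process where each message requires one token, splitting the one-bucket system into k sub-token buckets (r_l, b_l) with r = Σ r_l and b = Σ b_l can never improve the running sum of the message delays, irrespective of how messages are distributed to the k sub-token buckets.) -/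
open MeasureTheory ENNReal

/-- Proposition 1: splitting a token bucket `(r, b)` into `k` sub-token buckets
`(rl l, bl l)` with `r = ∑ rl l` and `b = ∑ bl l` can never improve the running sum
of message delays, irrespective of how messages are distributed to the sub-buckets. -/
theorem prop1_k_buckets (k : ℕ) (hk : 1 ≤ k)
    (rl : Fin k → ℝ) (hrl : ∀ l, 0 < rl l)
    (bl : Fin k → ℝ)
    (Al : Fin k → ℝ → ℝ) (hAl : ∀ l, Monotone (Al l))
    (r : ℝ) (hr : r = ∑ l, rl l)
    (b : ℝ) (hb : b = ∑ l, bl l)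
    (A : ℝ → ℝ) (hA : A = ∑ l, Al l)
    (U : ℝ → ℝ)
    (hU : ∀ t, U t = sSup ((fun s => A t - A s - r * (t - s)) '' Set.Icc 0 t))
    (Ul : Fin k → ℝ → ℝ)
    (hUl : ∀ l t, Ul l t =
      sSup ((fun s => Al l t - Al l s - rl l * (t - s)) '' Set.Icc 0 t))
    (N : ℝ → ℤ) (hN : ∀ t, N t = ⌈max 0 (U t - b)⌉)
    (Nl : Fin k → ℝ → ℤ) (hNl : ∀ l t, Nl l t = ⌈max 0 (Ul l t - bl l)⌉)
    (S Sk : ℝ → ℝ≥0∞)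
    (hS : ∀ t, S t = ∫⁻ u in Set.Icc 0 t, ENNReal.ofReal ((N u : ℝ)))
    (hSk : ∀ t, Sk t = ∫⁻ u in Set.Icc 0 t, ENNReal.ofReal (∑ l, (Nl l u : ℝ)))
    (t : ℝ) (ht : 0 ≤ t) :
    S t ≤ Sk t := by
  have key : ∀ u : ℝ, (N u : ℝ) ≤ ∑ l, (Nl l u : ℝ) := by
    intro u
    have hbdd : ∀ l, BddAbove ((fun s => Al l u - Al l s - rl l * (u - s)) '' Set.Icc 0 u) := by
      intro l
      refine ⟨Al l u - Al l 0, ?_⟩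
      rintro x ⟨s, ⟨hs0, hsu⟩, rfl⟩
      have h1 : Al l 0 ≤ Al l s := hAl l hs0
      have h2 : 0 ≤ rl l * (u - s) := mul_nonneg (hrl l).le (by linarith)
      simp only
      linarith
    have hUlnn : ∀ l, 0 ≤ u → 0 ≤ Ul l u := by
      intro l hu
      rw [hUl]
      have hmem : (0:ℝ) ∈ ((fun s => Al l u - Al l s - rl l * (u - s)) '' Set.Icc 0 u) :=
        ⟨u, ⟨hu, le_rfl⟩, by ring⟩
      exact le_csSup (hbdd l) hmem
    have hUsum : U u ≤ ∑ l, Ul l u := by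
      by_cases hu : 0 ≤ u
      · rw [hU]
        apply Real.sSup_le
        · rintro x ⟨s, hs, rfl⟩
          have hterm : ∀ l, Al l u - Al l s - rl l * (u - s) ≤ Ul l u := by
            intro l
            rw [hUl]
            exact le_csSup (hbdd l) ⟨s, hs, rfl⟩
          calc A u - A s - r * (u - s)
              = ∑ l, (Al l u - Al l s - rl l * (u - s)) := by
                simp [hA, hr, Finset.sum_sub_distrib, Finset.sum_mul, Finset.sum_apply]
            _ ≤ ∑ l, Ul l u := Finset.sum_le_sum fun l _ => hterm l
        · exact Finset.sum_nonneg fun l _ => hUlnn l hu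
      · push_neg at hu
        have hempty : Set.Icc (0:ℝ) u = ∅ := Set.Icc_eq_empty (by linarith)
        have hU0 : U u = 0 := by rw [hU, hempty]; simp [Real.sSup_empty]
        have hUl0 : ∀ l, Ul l u = 0 := by
          intro l; rw [hUl, hempty]; simp [Real.sSup_empty]
        simp [hU0, hUl0]
    have hmax : max 0 (U u - b) ≤ ∑ l, max 0 (Ul l u - bl l) := by
      apply max_le
      · exact Finset.sum_nonneg fun l _ => le_max_left _ _
      · calc U u - b ≤ (∑ l, Ul l u) - ∑ l, bl l := by rw [← hb]; linarith
          _ = ∑ l, (Ul l u - bl l) := by rw [Finset.sum_sub_distrib]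
          _ ≤ ∑ l, max 0 (Ul l u - bl l) := Finset.sum_le_sum fun l _ => le_max_right _ _
    have hint : N u ≤ ∑ l, Nl l u := by
      rw [hN]
      calc ⌈max 0 (U u - b)⌉ ≤ ⌈∑ l, max 0 (Ul l u - bl l)⌉ := Int.ceil_le_ceil hmax
        _ ≤ ∑ l, Nl l u := by
            rw [Int.ceil_le]
            push_cast
            refine Finset.sum_le_sum fun l _ => ?_
            rw [hNl]
            exact Int.le_ceil _
    exact_mod_cast hint
  rw [hS t, hSk t]
  exact lintegral_mono fun u => ENNReal.ofReal_le_ofReal (key u)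
end
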